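/- arXiv:2010.14724 — 7 statements merged into one kernel-verified Lean document; each statement's English description precedes it below -/
import Mathlib

section
/- Let α1, α2, β1, β2 be integers with α1β2 − α2β1 = 3^η · σ · ϑ for integers η ≥ 1 and ϑ not divisible by 3, where σ = gcd(α1,α2) is not divisible by 3, α1 = σ t1, α2 = σ t2, gcd(t1,t2)=1, and p t1 + q t2 = 1. Define ω = p β1 + q β2. If 3 does not divide 2α1 − β1 or 3 does not divide 2α2 − β2, then 3 does not divide 2σ − ω. -/
lemma key3 : ∀ σ t1 t2 β1 β2 p q : ZMod 3, σ ≠ 0 →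
    t1 * β2 - t2 * β1 = 0 → p * t1 + q * t2 = 1 →
    (2 * σ * t1 - β1 ≠ 0 ∨ 2 * σ * t2 - β2 ≠ 0) →
    2 * σ - (p * β1 + q * β2) ≠ 0 := by decide

theorem stmt_2 (α1 α2 β1 β2 p q t1 t2 σ ϑ ω : ℤ) (η : ℕ)
    (hη : 1 ≤ η)
    (hdet : α1 * β2 - α2 * β1 = 3 ^ η * σ * ϑ)
    (hϑ : ¬ (3 : ℤ) ∣ ϑ)
    (hσ : σ = Int.gcd α1 α2) (hσ3 : ¬ (3 : ℤ) ∣ σ)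
    (ht1 : α1 = σ * t1) (ht2 : α2 = σ * t2)
    (hgcd : Int.gcd t1 t2 = 1)
    (hpq : p * t1 + q * t2 = 1)
    (hω : ω = p * β1 + q * β2)
    (h : ¬ (3 : ℤ) ∣ 2 * α1 - β1 ∨ ¬ (3 : ℤ) ∣ 2 * α2 - β2) :
    ¬ (3 : ℤ) ∣ 2 * σ - ω := by
  have hσ0 : σ ≠ 0 := fun hs => hσ3 (hs ▸ dvd_zero 3)
  have hdet' : t1 * β2 - t2 * β1 = 3 ^ η * ϑ := by
    have : σ * (t1 * β2 - t2 * β1) = σ * (3 ^ η * ϑ) := by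
      rw [ht1, ht2] at hdet; ring_nf; ring_nf at hdet; linarith
    exact mul_left_cancel₀ hσ0 this
  -- cast everything to ZMod 3
  have cast_dvd : ∀ x : ℤ, (3 : ℤ) ∣ x ↔ ((x : ZMod 3) = 0) := fun x => by
    rw [ZMod.intCast_zmod_eq_zero_iff_dvd]; norm_num
  rw [cast_dvd]
  have hσc : ((σ : ZMod 3)) ≠ 0 := fun hx => hσ3 ((cast_dvd σ).mpr hx)
  have hdc : (t1 : ZMod 3) * (β2 : ZMod 3) - (t2 : ZMod 3) * (β1 : ZMod 3) = 0 := by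
    have := congrArg (Int.cast : ℤ → ZMod 3) hdet'
    push_cast at this
    rw [this]
    have h3 : (3 : ZMod 3) = 0 := by decide
    rw [h3, zero_pow (by omega), zero_mul]
  have hpqc : (p : ZMod 3) * t1 + (q : ZMod 3) * t2 = 1 := by
    have := congrArg (Int.cast : ℤ → ZMod 3) hpq
    push_cast at this; exact this
  have hc : (2 * (σ : ZMod 3) * t1 - β1 ≠ 0 ∨ 2 * (σ : ZMod 3) * t2 - β2 ≠ 0) := by
    rcases h with h | h
    · left
      rw [cast_dvd, ht1] at h
      push_cast at h
      intro hx; apply h; rw [← hx]; ring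
    · right
      rw [cast_dvd, ht2] at h
      push_cast at h
      intro hx; apply h; rw [← hx]; ring
  have := key3 σ t1 t2 β1 β2 p q hσc hdc hpqc hc
  intro hx; apply this
  rw [hω] at hx
  push_cast at hx
  linear_combination hx
end

section
/- Let σ, ω, ϑ be integers with σ, ϑ not divisible by 3, let η ≥ 1, γ = σϑ, and suppose 3 divides 2σ − ω. Define m(x,y) = (1/3)(1 + e^{2πi σ x} + e^{2πi (ω x + 3^η ϑ y)}). Then for every pair of integers ℓ1, ℓ2 with 3 ∤ ℓ1, the point (ℓ1/3, ℓ2/3^η) is a zero of m. -/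
open Complex Real

/-! With `a = σ ℓ₁`, which is prime to `3`, the first exponential is the primitive cube root of
unity `ζ = e^{2πi a/3}`. Since `ω ≡ 2σ (mod 3)` and the `y`-term contributes the integer `ϑ ℓ₂`,
the second exponential is `ζ²`, so `m = (1 + ζ + ζ²)/3 = 0`. -/

theorem geom_sum_exp_two_pi_I_mul_div_eq_zero {a : ℤ} {n : ℕ} (hn : 1 < n) (ha : IsCoprime a n) :
    ∑ j ∈ Finset.range n, exp (2 * π * I * (a / n)) ^ j = 0 :=
  (isPrimitiveRoot_exp_of_isCoprime a n (by omega) ha).geom_sum_eq_zero hn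

theorem one_add_exp_add_sq_eq_zero_of_not_three_dvd {a : ℤ} (ha : ¬ 3 ∣ a) :
    1 + exp (2 * π * I * (a / 3)) + exp (2 * π * I * (a / 3)) ^ 2 = 0 := by
  have hcop : IsCoprime a (3 : ℕ) :=
    ((Irreducible.coprime_iff_not_dvd Int.prime_three.irreducible).2 ha).symm
  simpa [Finset.sum_range_succ] using geom_sum_exp_two_pi_I_mul_div_eq_zero (by norm_num) hcop

theorem exp_two_pi_I_mul_add_int (z : ℂ) (n : ℤ) :
    exp (2 * π * I * (z + n)) = exp (2 * π * I * z) := by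
  rw [mul_add, Complex.exp_add, mul_comm _ (n : ℂ), exp_int_mul_two_pi_mul_I, mul_one]

theorem exp_two_pi_I_mul_two_mul (z : ℂ) :
    exp (2 * π * I * (2 * z)) = exp (2 * π * I * z) ^ 2 := by
  rw [← Complex.exp_nat_mul]
  ring_nf

theorem stmt_4_general (σ ω ϑ : ℤ) (η : ℕ)
    (hσ3 : ¬ (3 : ℤ) ∣ σ)
    (hdiv : (3 : ℤ) ∣ 2 * σ - ω)
    (m : ℝ → ℝ → ℂ)
    (hm : ∀ x y : ℝ, m x y = (1/3) * (1 + Complex.exp (2 * Real.pi * Complex.I * (σ * x))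
      + Complex.exp (2 * Real.pi * Complex.I * (ω * x + 3 ^ η * ϑ * y))))
    (ℓ1 ℓ2 : ℤ) (hℓ1 : ¬ (3 : ℤ) ∣ ℓ1) :
    m ((ℓ1 : ℝ) / 3) ((ℓ2 : ℝ) / 3 ^ η) = 0 := by
  obtain ⟨k, hk⟩ := hdiv
  have hkC : (2 * σ - ω : ℂ) = 3 * k := by exact_mod_cast hk
  have ha : ¬ 3 ∣ σ * ℓ1 := Int.prime_three.not_dvd_mul hσ3 hℓ1
  have harg₁ : (σ : ℂ) * ((ℓ1 / 3 : ℝ) : ℂ) = (σ * ℓ1 : ℤ) / 3 := by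
    push_cast
    ring
  have harg₂ : (ω : ℂ) * ((ℓ1 / 3 : ℝ) : ℂ) + 3 ^ η * ϑ * ((ℓ2 / 3 ^ η : ℝ) : ℂ)
      = 2 * ((σ * ℓ1 : ℤ) / 3) + (ϑ * ℓ2 - k * ℓ1 : ℤ) := by
    push_cast
    field_simp
    linear_combination (-ℓ1 : ℂ) * hkC
  rw [hm, harg₁, harg₂, exp_two_pi_I_mul_add_int, exp_two_pi_I_mul_two_mul,
    one_add_exp_add_sq_eq_zero_of_not_three_dvd ha, mul_zero]

theorem stmt_4 (σ ω ϑ γ : ℤ) (η : ℕ) (hη : 1 ≤ η)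
    (hσ3 : ¬ (3 : ℤ) ∣ σ) (hϑ3 : ¬ (3 : ℤ) ∣ ϑ)
    (hγ : γ = σ * ϑ)
    (hdiv : (3 : ℤ) ∣ 2 * σ - ω)
    (m : ℝ → ℝ → ℂ)
    (hm : ∀ x y : ℝ, m x y = (1/3) * (1 + Complex.exp (2 * Real.pi * Complex.I * (σ * x))
      + Complex.exp (2 * Real.pi * Complex.I * (ω * x + 3 ^ η * ϑ * y))))
    (ℓ1 ℓ2 : ℤ) (hℓ1 : ¬ (3 : ℤ) ∣ ℓ1) :
    m ((ℓ1 : ℝ) / 3) ((ℓ2 : ℝ) / 3 ^ η) = 0 :=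
  stmt_4_general σ ω ϑ η hσ3 hdiv m hm ℓ1 ℓ2 hℓ1
end

section
/- Let σ, ω, ϑ be integers with σ, ϑ not divisible by 3, let η ≥ 1, γ = σϑ, and suppose 3 divides 2σ − ω. Define m(x,y) = (1/3)(1 + e^{2πi σ x} + e^{2πi (ω x + 3^η ϑ y)}). Then every zero (x,y) of m has the form x = ℓ1/(3γ) and y = ℓ2/(3^η γ) for some integers ℓ1, ℓ2 with 3 ∤ ℓ1. -/
/-!
If `1 + u + v = 0` with `|u| = |v| = 1`, conjugating gives `1 + u⁻¹ + v⁻¹ = 0`, which forces `u` to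
be a primitive cube root of unity and `v = u²`. For `u = 𝐞(σx)` and `v = 𝐞(ωx + 3^η ϑy)` this says
that `3σx` is an integer prime to `3` and that `ωx + 3^η ϑy - 2σx` is an integer; solving for `x`
and `y`, using `2σ - ω ∈ 3ℤ`, gives the claimed form.
-/

open Complex Real

open scoped FourierTransform ComplexConjugate

theorem Circle.sq_add_self_add_one_eq_zero_and_eq_sq {u v : Circle} (h : 1 + (u : ℂ) + v = 0) :
    (u : ℂ) ^ 2 + u + 1 = 0 ∧ v = u ^ 2 := by
  have hconj : 1 + (u : ℂ)⁻¹ + (v : ℂ)⁻¹ = 0 := by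
    simpa [← Circle.coe_inv, Circle.coe_inv_eq_conj] using congrArg conj h
  have hv : (v : ℂ) = -1 - u := by linear_combination h
  have hu0 := u.coe_ne_zero
  have hv0 := v.coe_ne_zero
  have hquad : (u : ℂ) ^ 2 + u + 1 = 0 := by
    rw [hv] at hconj hv0
    field_simp at hconj
    linear_combination -hconj
  refine ⟨hquad, Circle.ext ?_⟩
  rw [hv, Circle.coe_pow]
  linear_combination -hquad

theorem Real.fourierChar_eq_one_iff {t : ℝ} : 𝐞 t = 1 ↔ ∃ n : ℤ, t = n := by
  rw [fourierChar_apply', Circle.exp_eq_one]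
  refine exists_congr fun n ↦ ?_
  constructor <;> intro h <;> nlinarith [Real.pi_pos]

theorem Real.coe_fourierChar (t : ℝ) : (𝐞 t : ℂ) = Complex.exp (2 * π * I * t) := by
  rw [fourierChar_apply]; push_cast; ring_nf

theorem exists_int_of_one_add_fourierChar_add_fourierChar_eq_zero {a b : ℝ}
    (h : 1 + (𝐞 a : ℂ) + 𝐞 b = 0) :
    ∃ n k : ℤ, ¬ (3 : ℤ) ∣ n ∧ 3 * a = n ∧ b = 2 * a + k := by
  obtain ⟨hquad, hb⟩ := Circle.sq_add_self_add_one_eq_zero_and_eq_sq h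
  have hne : 𝐞 a ≠ 1 := by
    rintro ha
    rw [ha, Circle.coe_one] at hquad
    norm_num at hquad
  have hcube : 𝐞 (3 * a) = 1 := by
    rw [← Nat.cast_ofNat, ← nsmul_eq_mul, AddChar.map_nsmul_eq_pow]
    ext
    push_cast
    linear_combination ((𝐞 a : ℂ) - 1) * hquad
  have hdiff : 𝐞 (b - 2 * a) = 1 := by
    rw [AddChar.map_sub_eq_div, ← Nat.cast_ofNat, ← nsmul_eq_mul, AddChar.map_nsmul_eq_pow, hb,
      div_self']
  obtain ⟨n, hn⟩ := Real.fourierChar_eq_one_iff.mp hcube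
  obtain ⟨k, hk⟩ := Real.fourierChar_eq_one_iff.mp hdiff
  refine ⟨n, k, ?_, hn, by linarith⟩
  rintro ⟨j, rfl⟩
  exact hne (Real.fourierChar_eq_one_iff.mpr ⟨j, by push_cast at hn; linarith⟩)

theorem stmt_5_general (σ ω ϑ γ : ℤ) (η : ℕ)
    (hσ3 : ¬ (3 : ℤ) ∣ σ) (hϑ3 : ¬ (3 : ℤ) ∣ ϑ)
    (hγ : γ = σ * ϑ)
    (hdiv : (3 : ℤ) ∣ 2 * σ - ω)
    (m : ℝ → ℝ → ℂ)
    (hm : ∀ x y : ℝ, m x y = (1/3) * (1 + Complex.exp (2 * Real.pi * Complex.I * (σ * x))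
      + Complex.exp (2 * Real.pi * Complex.I * (ω * x + 3 ^ η * ϑ * y))))
    (x y : ℝ) (hxy : m x y = 0) :
    ∃ ℓ1 ℓ2 : ℤ, ¬ (3 : ℤ) ∣ ℓ1 ∧ x = (ℓ1 : ℝ) / (3 * γ) ∧ y = (ℓ2 : ℝ) / (3 ^ η * γ) := by
  have hzero : 1 + (𝐞 (σ * x) : ℂ) + 𝐞 (ω * x + 3 ^ η * ϑ * y) = 0 := by
    rw [hm] at hxy
    simpa [Real.coe_fourierChar] using hxy
  obtain ⟨n, k, hn3, hn, hk⟩ := exists_int_of_one_add_fourierChar_add_fourierChar_eq_zero hzero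
  obtain ⟨d, hd⟩ := hdiv
  have hσ : (σ : ℝ) ≠ 0 := Int.cast_ne_zero.mpr (by rintro rfl; exact hσ3 (dvd_zero 3))
  have hϑ : (ϑ : ℝ) ≠ 0 := Int.cast_ne_zero.mpr (by rintro rfl; exact hϑ3 (dvd_zero 3))
  have hdR : (2 : ℝ) * σ - ω = 3 * d := by exact_mod_cast hd
  refine ⟨n * ϑ, n * d + k * σ, ?_, ?_, ?_⟩
  · rw [Int.prime_three.dvd_mul]
    exact not_or.mpr ⟨hn3, hϑ3⟩
  · subst hγ
    push_cast
    field_simp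
    linear_combination hn
  · subst hγ
    push_cast
    field_simp
    linear_combination (σ : ℝ) * hk + d * hn + σ * x * hdR

theorem stmt_5 (σ ω ϑ γ : ℤ) (η : ℕ) (hη : 1 ≤ η)
    (hσ3 : ¬ (3 : ℤ) ∣ σ) (hϑ3 : ¬ (3 : ℤ) ∣ ϑ)
    (hγ : γ = σ * ϑ)
    (hdiv : (3 : ℤ) ∣ 2 * σ - ω)
    (m : ℝ → ℝ → ℂ)
    (hm : ∀ x y : ℝ, m x y = (1/3) * (1 + Complex.exp (2 * Real.pi * Complex.I * (σ * x))
      + Complex.exp (2 * Real.pi * Complex.I * (ω * x + 3 ^ η * ϑ * y))))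
    (x y : ℝ) (hxy : m x y = 0) :
    ∃ ℓ1 ℓ2 : ℤ, ¬ (3 : ℤ) ∣ ℓ1 ∧ x = (ℓ1 : ℝ) / (3 * γ) ∧ y = (ℓ2 : ℝ) / (3 ^ η * γ) :=
  stmt_5_general σ ω ϑ γ η hσ3 hϑ3 hγ hdiv m hm x y hxy
end

section
/- Let σ, ω, ϑ be integers with σ, ϑ not divisible by 3, η ≥ 1, γ = σϑ, and suppose 3 does not divide 2σ − ω. Define m(x,y) = (1/3)(1 + e^{2πi σ x} + e^{2πi (ω x + 3^η ϑ y)}). Then every zero (x,y) of m has the form x = ℓ1/(3γ), y = ℓ2/(3^{η+1} γ) with integers ℓ1, ℓ2 both not divisible by 3. -/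
open Complex Real

/-! Two unimodular numbers `u, v` with `1 + u + v = 0` are the two primitive cube roots of unity,
with `v = u²`. For `u = e^{2πiσx}` this gives `3σx = n` with `3 ∤ n`, and `v = u²` gives
`ωx + 3^η ϑ y = 2σx + k` with `k ∈ ℤ`. Solving, `x = nϑ / (3γ)` and
`y = ((2σ - ω)n + 3σk) / (3^(η+1) γ)`, and `3 ∤ nϑ`, `3 ∤ (2σ - ω)n + 3σk`. -/

lemma exp_two_pi_mul_I_eq_exp_iff {a b : ℝ} :
    exp (2 * π * I * a) = exp (2 * π * I * b) ↔ ∃ n : ℤ, a = b + n := by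
  have h2πI : 2 * (π : ℂ) * I ≠ 0 := by simp [pi_ne_zero, I_ne_zero]
  rw [exp_eq_exp_iff_exists_int]
  refine exists_congr fun n => ?_
  rw [show 2 * π * I * b + n * (2 * π * I) = 2 * π * I * ((b + n : ℝ) : ℂ) by push_cast; ring,
    mul_right_inj' h2πI, ofReal_inj]

lemma norm_exp_two_pi_mul_I_mul (t : ℝ) : ‖exp (2 * π * I * t)‖ = 1 := by
  rw [show 2 * π * I * t = ((2 * π * t : ℝ) : ℂ) * I by push_cast; ring]
  exact norm_exp_ofReal_mul_I _

lemma sq_add_self_add_one_eq_zero_of_one_add_add_eq_zero {u v : ℂ} (hu : ‖u‖ = 1) (hv : ‖v‖ = 1)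
    (h : 1 + u + v = 0) : u ^ 2 + u + 1 = 0 ∧ v = u ^ 2 := by
  have hu0 : u ≠ 0 := norm_ne_zero_iff.mp (by simp [hu])
  have hv0 : v ≠ 0 := norm_ne_zero_iff.mp (by simp [hv])
  have hconj : 1 + u⁻¹ + v⁻¹ = 0 := by
    rw [inv_eq_conj hu, inv_eq_conj hv]
    simpa using congrArg (starRingEnd ℂ) h
  field_simp at hconj
  have key : u ^ 2 + u + 1 = 0 := by linear_combination (u + 1) * h - hconj
  exact ⟨key, by linear_combination h - key⟩

lemma exists_int_not_three_dvd_of_exp_sq_add_add_one_eq_zero {t : ℝ}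
    (h : exp (2 * π * I * t) ^ 2 + exp (2 * π * I * t) + 1 = 0) :
    ∃ n : ℤ, ¬ 3 ∣ n ∧ 3 * t = n := by
  have hcube : exp (2 * π * I * (3 * t : ℝ)) = exp (2 * π * I * (0 : ℝ)) := by
    rw [ofReal_zero, mul_zero, Complex.exp_zero, ofReal_mul, ofReal_ofNat,
      show 2 * π * I * (3 * t) = ((3 : ℕ) : ℂ) * (2 * π * I * t) by push_cast; ring,
      Complex.exp_nat_mul]
    linear_combination (exp (2 * π * I * t) - 1) * h
  obtain ⟨n, hn⟩ := exp_two_pi_mul_I_eq_exp_iff.mp hcube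
  refine ⟨n, ?_, by simpa using hn⟩
  rintro ⟨j, rfl⟩
  have ht : exp (2 * π * I * t) = 1 := by
    rw [show t = j by push_cast at hn; linarith]
    simpa [mul_comm] using exp_int_mul_two_pi_mul_I j
  rw [ht] at h
  norm_num at h

theorem stmt_6_general (σ ω ϑ γ : ℤ) (η : ℕ)
    (hσ3 : ¬ (3 : ℤ) ∣ σ) (hϑ3 : ¬ (3 : ℤ) ∣ ϑ)
    (hγ : γ = σ * ϑ)
    (hdiv : ¬ (3 : ℤ) ∣ 2 * σ - ω)
    (m : ℝ → ℝ → ℂ)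
    (hm : ∀ x y : ℝ, m x y = (1/3) * (1 + Complex.exp (2 * Real.pi * Complex.I * (σ * x))
      + Complex.exp (2 * Real.pi * Complex.I * (ω * x + 3 ^ η * ϑ * y))))
    (x y : ℝ) (hxy : m x y = 0) :
    ∃ ℓ1 ℓ2 : ℤ, ¬ (3 : ℤ) ∣ ℓ1 ∧ ¬ (3 : ℤ) ∣ ℓ2 ∧
      x = (ℓ1 : ℝ) / (3 * γ) ∧ y = (ℓ2 : ℝ) / (3 ^ (η + 1) * γ) := by
  set a : ℝ := σ * x
  set b : ℝ := ω * x + 3 ^ η * ϑ * y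
  have hsum : 1 + exp (2 * π * I * a) + exp (2 * π * I * b) = 0 := by
    rw [hm] at hxy
    push_cast [a, b]
    linear_combination 3 * hxy
  obtain ⟨hroot, hb⟩ := sq_add_self_add_one_eq_zero_of_one_add_add_eq_zero
    (norm_exp_two_pi_mul_I_mul a) (norm_exp_two_pi_mul_I_mul b) hsum
  obtain ⟨n, hn3, hn⟩ := exists_int_not_three_dvd_of_exp_sq_add_add_one_eq_zero hroot
  obtain ⟨k, hk⟩ : ∃ k : ℤ, b = 2 * a + k := by
    refine exp_two_pi_mul_I_eq_exp_iff.mp (hb.trans ?_)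
    push_cast
    rw [← Complex.exp_nat_mul]
    ring_nf
  have hσ0 : (σ : ℝ) ≠ 0 := Int.cast_ne_zero.mpr (by rintro rfl; simp at hσ3)
  have hϑ0 : (ϑ : ℝ) ≠ 0 := Int.cast_ne_zero.mpr (by rintro rfl; simp at hϑ3)
  refine ⟨n * ϑ, (2 * σ - ω) * n + 3 * σ * k, ?_, ?_, ?_, ?_⟩
  · exact Int.prime_three.not_dvd_mul hn3 hϑ3
  · rw [dvd_add_left (dvd_mul_of_dvd_left (dvd_mul_right 3 σ) k)]
    exact Int.prime_three.not_dvd_mul hdiv hn3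
  · subst hγ
    push_cast
    field_simp
    linear_combination hn
  · subst hγ
    push_cast
    field_simp
    linear_combination 3 * σ * hk + (2 * σ - ω) * hn

theorem stmt_6 (σ ω ϑ γ : ℤ) (η : ℕ) (hη : 1 ≤ η)
    (hσ3 : ¬ (3 : ℤ) ∣ σ) (hϑ3 : ¬ (3 : ℤ) ∣ ϑ)
    (hγ : γ = σ * ϑ)
    (hdiv : ¬ (3 : ℤ) ∣ 2 * σ - ω)
    (m : ℝ → ℝ → ℂ)
    (hm : ∀ x y : ℝ, m x y = (1/3) * (1 + Complex.exp (2 * Real.pi * Complex.I * (σ * x))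
      + Complex.exp (2 * Real.pi * Complex.I * (ω * x + 3 ^ η * ϑ * y))))
    (x y : ℝ) (hxy : m x y = 0) :
    ∃ ℓ1 ℓ2 : ℤ, ¬ (3 : ℤ) ∣ ℓ1 ∧ ¬ (3 : ℤ) ∣ ℓ2 ∧
      x = (ℓ1 : ℝ) / (3 * γ) ∧ y = (ℓ2 : ℝ) / (3 ^ (η + 1) * γ) :=
  stmt_6_general σ ω ϑ γ η hσ3 hϑ3 hγ hdiv m hm x y hxy
end

section
/- Let σ, ω, ϑ be integers with σ, ϑ not divisible by 3, η ≥ 1, and suppose 3 does not divide 2σ − ω. Define m(x,y) = (1/3)(1 + e^{2πi σ x} + e^{2πi (ω x + 3^η ϑ y)}). Then there exists i ∈ {1,2} such that for all integers ℓ1, ℓ2 not divisible by 3 satisfying ℓ1 ≡ ℓ2 (mod 3) if i=1 (respectively ℓ1 ≢ ℓ2 (mod 3) if i=2), the point (ℓ1/3, ℓ2/3^{η+1}) is a zero of m. -/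
/-!
With `ζ = exp (2πi/3)`, the point `(ℓ1/3, ℓ2/3^(η+1))` gives `3 m = 1 + ζ^(σ ℓ1) + ζ^(ω ℓ1 + ϑ ℓ2)`,
and `1 + ζ^a + ζ^b` vanishes as soon as `3 ∤ a` and `3 ∣ a + b`. Since `ω ≢ 2σ ≡ -σ`, the residue
`σ + ω` is a unit mod 3, so 3 divides `σ + ω + ϑ` or `σ + ω - ϑ`. Taking `ℓ2 ≡ ℓ1` in the first
case and `ℓ2 ≡ -ℓ1` in the second gives `σ ℓ1 + ω ℓ1 + ϑ ℓ2 ≡ ℓ1 (σ + ω ± ϑ) ≡ 0`.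
-/

open Complex Real

theorem IsPrimitiveRoot.one_add_zpow_add_zpow_eq_zero {K : Type*} [Field K] {ζ : K}
    (hζ : IsPrimitiveRoot ζ 3) {a b : ℤ} (ha : ¬ 3 ∣ a) (hab : 3 ∣ a + b) :
    1 + ζ ^ a + ζ ^ b = 0 := by
  have hζa : IsPrimitiveRoot (ζ ^ a) 3 := hζ.zpow_of_gcd_eq_one a <|
    Int.isCoprime_iff_gcd_eq_one.mp (Int.prime_three.coprime_iff_not_dvd.2 ha).symm
  have hb : ζ ^ b = (ζ ^ a) ^ 2 := by
    obtain ⟨k, hk⟩ := hab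
    rw [show b = 2 * a + 3 * (k - a) by omega, zpow_add₀ (hζ.ne_zero (by norm_num)),
      zpow_mul ζ 3, show ζ ^ (3 : ℤ) = 1 from hζ.zpow_eq_one, one_zpow, mul_one,
      ← zpow_natCast, ← zpow_mul, mul_comm]
    rfl
  have hsum := hζa.geom_sum_eq_zero (by norm_num)
  simp only [Finset.sum_range_succ, Finset.sum_range_zero, pow_zero, pow_one, zero_add] at hsum
  rw [hb, hsum]

theorem Complex.exp_two_pi_I_mul_int_div (n : ℤ) (k : ℂ) :
    cexp (2 * π * I * (n / k)) = cexp (2 * π * I / k) ^ n := by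
  rw [← Complex.exp_int_mul]
  ring_nf

theorem Int.three_dvd_add_add_or_three_dvd_add_sub {σ ω ϑ : ℤ} (hϑ : ¬ 3 ∣ ϑ)
    (hσω : ¬ 3 ∣ 2 * σ - ω) : 3 ∣ σ + ω + ϑ ∨ 3 ∣ σ + ω - ϑ := by
  rcases (by omega : ϑ % 3 = 1 ∨ ϑ % 3 = 2) with h | h <;> omega

theorem stmt_7_general (σ ω ϑ : ℤ) (η : ℕ)
    (hσ3 : ¬ (3 : ℤ) ∣ σ) (hϑ3 : ¬ (3 : ℤ) ∣ ϑ)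
    (hdiv : ¬ (3 : ℤ) ∣ 2 * σ - ω)
    (m : ℝ → ℝ → ℂ)
    (hm : ∀ x y : ℝ, m x y = (1/3) * (1 + Complex.exp (2 * Real.pi * Complex.I * (σ * x))
      + Complex.exp (2 * Real.pi * Complex.I * (ω * x + 3 ^ η * ϑ * y)))) :
    (∀ ℓ1 ℓ2 : ℤ, ¬ (3 : ℤ) ∣ ℓ1 → ¬ (3 : ℤ) ∣ ℓ2 → ℓ1 % 3 = ℓ2 % 3 →
      m ((ℓ1 : ℝ) / 3) ((ℓ2 : ℝ) / 3 ^ (η + 1)) = 0) ∨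
    (∀ ℓ1 ℓ2 : ℤ, ¬ (3 : ℤ) ∣ ℓ1 → ¬ (3 : ℤ) ∣ ℓ2 → ℓ1 % 3 ≠ ℓ2 % 3 →
      m ((ℓ1 : ℝ) / 3) ((ℓ2 : ℝ) / 3 ^ (η + 1)) = 0) := by
  have hζ := Complex.isPrimitiveRoot_exp 3 (by norm_num)
  have zero_of_dvd (ℓ1 ℓ2 : ℤ) (hℓ1 : ¬ 3 ∣ ℓ1) (h : 3 ∣ σ * ℓ1 + (ω * ℓ1 + ϑ * ℓ2)) :
      m ((ℓ1 : ℝ) / 3) ((ℓ2 : ℝ) / 3 ^ (η + 1)) = 0 := by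
    have hphase : (ω : ℂ) * (ℓ1 / 3 : ℝ) + 3 ^ η * ϑ * (ℓ2 / 3 ^ (η + 1) : ℝ)
        = ((ω * ℓ1 + ϑ * ℓ2 : ℤ) : ℂ) / (3 : ℕ) := by
      push_cast
      field_simp
      ring
    rw [hm, hphase, show (σ : ℂ) * (ℓ1 / 3 : ℝ) = ((σ * ℓ1 : ℤ) : ℂ) / (3 : ℕ) by push_cast; ring,
      exp_two_pi_I_mul_int_div, exp_two_pi_I_mul_int_div,
      hζ.one_add_zpow_add_zpow_eq_zero (Int.prime_three.not_dvd_mul hσ3 hℓ1) h, mul_zero]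
  rcases Int.three_dvd_add_add_or_three_dvd_add_sub hϑ3 hdiv with h | h
  · refine .inl fun ℓ1 ℓ2 hℓ1 _ hℓ ↦ zero_of_dvd ℓ1 ℓ2 hℓ1 ?_
    rw [show σ * ℓ1 + (ω * ℓ1 + ϑ * ℓ2) = ℓ1 * (σ + ω + ϑ) + ϑ * (ℓ2 - ℓ1) by ring]
    exact dvd_add (h.mul_left ℓ1) (Dvd.dvd.mul_left (by omega) ϑ)
  · refine .inr fun ℓ1 ℓ2 hℓ1 hℓ2 hℓ ↦ zero_of_dvd ℓ1 ℓ2 hℓ1 ?_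
    rw [show σ * ℓ1 + (ω * ℓ1 + ϑ * ℓ2) = ℓ1 * (σ + ω - ϑ) + ϑ * (ℓ1 + ℓ2) by ring]
    exact dvd_add (h.mul_left ℓ1) (Dvd.dvd.mul_left (by omega) ϑ)

theorem stmt_7 (σ ω ϑ : ℤ) (η : ℕ) (hη : 1 ≤ η)
    (hσ3 : ¬ (3 : ℤ) ∣ σ) (hϑ3 : ¬ (3 : ℤ) ∣ ϑ)
    (hdiv : ¬ (3 : ℤ) ∣ 2 * σ - ω)
    (m : ℝ → ℝ → ℂ)
    (hm : ∀ x y : ℝ, m x y = (1/3) * (1 + Complex.exp (2 * Real.pi * Complex.I * (σ * x))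
      + Complex.exp (2 * Real.pi * Complex.I * (ω * x + 3 ^ η * ϑ * y)))) :
    (∀ ℓ1 ℓ2 : ℤ, ¬ (3 : ℤ) ∣ ℓ1 → ¬ (3 : ℤ) ∣ ℓ2 → ℓ1 % 3 = ℓ2 % 3 →
      m ((ℓ1 : ℝ) / 3) ((ℓ2 : ℝ) / 3 ^ (η + 1)) = 0) ∨
    (∀ ℓ1 ℓ2 : ℤ, ¬ (3 : ℤ) ∣ ℓ1 → ¬ (3 : ℤ) ∣ ℓ2 → ℓ1 % 3 ≠ ℓ2 % 3 →
      m ((ℓ1 : ℝ) / 3) ((ℓ2 : ℝ) / 3 ^ (η + 1)) = 0) :=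
  stmt_7_general σ ω ϑ η hσ3 hϑ3 hdiv m hm
end

section
/- Let M = [[4,0],[1,3]] and D = {(0,0), (1,0), (0,1)} ⊂ ℤ², S = {(0,0), (2,2), (3,1)} ⊂ ℤ². Then the 3×3 matrix H = (1/√3)·(e^{2πi ⟨M⁻¹d, s⟩})_{d∈D, s∈S} is unitary; i.e., (M, D, S) is a Hadamard triple. -/
open Matrix Complex Real

/-!
Over a finite commutative ring `R`, a primitive additive character `ψ` satisfies
`∑ x, ψ (x * b) = 0` for `b ≠ 0`, and `conj (ψ a) = ψ (-a)`; hence `(ψ (j * k)) / √#R` is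
unitary. Here `M⁻¹ = !![1/4, 0; -1/12, 1/3]` and the phases `⟨M⁻¹ dᵢ, sⱼ⟩` come out as
`(i * j mod 3) / 3`, so `H` is exactly this matrix for the standard character of `ZMod 3`.
-/

namespace AddChar

variable {R : Type*} [CommRing R] [Fintype R]

lemma starRingEnd_apply_eq_map_neg (ψ : AddChar R ℂ) (a : R) :
    starRingEnd ℂ (ψ a) = ψ (-a) := by
  rw [starComp_apply (Nat.pos_of_ne_zero (CharP.ringChar_ne_zero_of_finite R)), inv_apply]

noncomputable def fourierMatrix (ψ : AddChar R ℂ) : Matrix R R ℂ :=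
  of fun j k => (√(Fintype.card R) : ℂ)⁻¹ * ψ (j * k)

lemma fourierMatrix_apply (ψ : AddChar R ℂ) (j k : R) :
    fourierMatrix ψ j k = (√(Fintype.card R) : ℂ)⁻¹ * ψ (j * k) :=
  rfl

theorem fourierMatrix_conjTranspose_mul_self [DecidableEq R] {ψ : AddChar R ℂ}
    (hψ : ψ.IsPrimitive) : (fourierMatrix ψ)ᴴ * fourierMatrix ψ = 1 := by
  ext j k
  have hcard : (√(Fintype.card R) : ℂ) ^ 2 = Fintype.card R := by
    rw [← ofReal_pow, Real.sq_sqrt (Nat.cast_nonneg _), ofReal_natCast]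
  have hentry : ∀ i, star (fourierMatrix ψ i j) * fourierMatrix ψ i k =
      (Fintype.card R : ℂ)⁻¹ * ψ (i * (k - j)) := fun i => by
    rw [fourierMatrix_apply, fourierMatrix_apply, ← hcard, RCLike.star_def, map_mul,
      starRingEnd_apply_eq_map_neg, map_inv₀, conj_ofReal, mul_sub, sub_eq_neg_add,
      map_add_eq_mul]
    ring
  rw [Matrix.mul_apply, Matrix.one_apply]
  simp only [conjTranspose_apply, hentry, ← Finset.mul_sum, sum_mulShift _ hψ, sub_eq_zero,
    eq_comm (a := k)]
  split_ifs
  · exact inv_mul_cancel₀ (Nat.cast_ne_zero.2 Fintype.card_ne_zero)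
  · simp

end AddChar

open AddChar ZMod

lemma inv_four_zero_one_three :
    (!![4, 0; 1, 3] : Matrix (Fin 2) (Fin 2) ℚ)⁻¹ = !![1/4, 0; -1/12, 1/3] := by
  rw [Matrix.inv_def, det_fin_two_of, adjugate_fin_two_of]
  ext i j; fin_cases i <;> fin_cases j <;> norm_num

lemma dotProduct_inv_mulVec_eq_val_mul_div_three (i j : ZMod 3) :
    ((!![4, 0; 1, 3] : Matrix (Fin 2) (Fin 2) ℚ)⁻¹ *ᵥ ![![0, 0], ![1, 0], ![0, 1]] i) ⬝ᵥ
      ![![0, 0], ![2, 2], ![3, 1]] j = ((i * j).val : ℚ) / 3 := by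
  rw [inv_four_zero_one_three, eq_div_iff three_ne_zero]
  fin_cases i <;> fin_cases j <;>
    norm_num [mulVec, dotProduct, Fin.sum_univ_two, -ZMod.natCast_val] <;> norm_cast

theorem stmt_13 (M : Matrix (Fin 2) (Fin 2) ℚ) (hM : M = !![4, 0; 1, 3])
    (D S : Fin 3 → Fin 2 → ℚ)
    (hD : D = ![![0, 0], ![1, 0], ![0, 1]])
    (hS : S = ![![0, 0], ![2, 2], ![3, 1]])
    (H : Matrix (Fin 3) (Fin 3) ℂ)
    (hH : H = fun i j => (1 / Real.sqrt 3 : ℂ) *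
      Complex.exp (2 * Real.pi * Complex.I *
        ((M⁻¹.mulVec (D i) ⬝ᵥ S j : ℚ) : ℂ))) :
    Hᴴ * H = 1 := by
  -- `ZMod 3` is definitionally `Fin 3`, so this compares matrices with the same index type.
  have hH_eq : fourierMatrix (R := ZMod 3) stdAddChar = H := by
    subst hM hD hS hH
    ext i j
    rw [fourierMatrix_apply, ZMod.card, stdAddChar_apply, toCircle_apply,
      dotProduct_inv_mulVec_eq_val_mul_div_three]
    push_cast
    ring_nf
  rw [← hH_eq]
  exact fourierMatrix_conjTranspose_mul_self (R := ZMod 3) (isPrimitive_stdAddChar 3)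
end

section
/- Let M = [[4,0],[2,3]] and D = {(0,0), (1,0), (0,1)} ⊂ ℤ². Then there exists no finite set S ⊂ ℤ² of cardinality 3 such that (M, D, S) is a Hadamard triple; equivalently, M* applied to any zero of the mask polynomial m_D is never in ℤ², where zeros of m_D in [0,1)² are {(1/3,2/3), (2/3,1/3)}. -/
open Matrix Complex Real

lemma stmt14_exp_quarter (t : ℤ) :
    Complex.exp (2 * Real.pi * Complex.I * ((t : ℂ)/4)) = Complex.I ^ t := by
  rw [show (2 * Real.pi * Complex.I * ((t : ℂ)/4) : ℂ) = t * ((Real.pi/2 : ℝ) * Complex.I) by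
    push_cast; ring, Complex.exp_int_mul]
  congr 1
  rw [Complex.exp_mul_I]
  simp

lemma stmt14_reim (t : ℤ) :
    ((Complex.I ^ t).re + (Complex.I ^ t).im = 1) ∨
    ((Complex.I ^ t).re + (Complex.I ^ t).im = -1) := by
  have h4 : (Complex.I : ℂ) ^ (4:ℤ) = 1 := by
    rw [show (4:ℤ) = ((4:ℕ):ℤ) from rfl, zpow_natCast, Complex.I_pow_four]
  have heq : Complex.I ^ t = Complex.I ^ (t % 4) := by
    conv_lhs => rw [← Int.emod_add_mul_ediv t 4]
    rw [zpow_add₀ Complex.I_ne_zero, _root_.zpow_mul, h4, _root_.one_zpow, mul_one]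
  rw [heq]
  have h0 : 0 ≤ t % 4 := Int.emod_nonneg t (by norm_num)
  have h1 : t % 4 < 4 := Int.emod_lt_of_pos t (by norm_num)
  interval_cases h : t % 4
  · norm_num
  · norm_num
  · rw [show (2:ℤ) = ((2:ℕ):ℤ) from rfl, zpow_natCast, Complex.I_sq]; norm_num
  · rw [show (3:ℤ) = ((3:ℕ):ℤ) from rfl, zpow_natCast]
    norm_num [pow_succ, Complex.I_sq]

lemma stmt14_exp_int' (r : ℝ) (h : Complex.exp (2 * Real.pi * Complex.I * r) = 1) :
    ∃ n : ℤ, r = n := by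
  rw [Complex.exp_eq_one_iff] at h
  obtain ⟨n, hn⟩ := h
  refine ⟨n, ?_⟩
  have h2 : (2 * (Real.pi:ℂ) * Complex.I) ≠ 0 := by
    simp [Real.pi_ne_zero, Complex.I_ne_zero]
  have : (r : ℂ) = n := by
    apply mul_left_cancel₀ h2
    rw [show (2 * (Real.pi:ℂ) * Complex.I * r) = 2 * Real.pi * Complex.I * r by norm_num, hn]
    ring
  exact_mod_cast this

lemma stmt14_exp_int'' (n : ℤ) : Complex.exp (2 * Real.pi * Complex.I * ((n:ℝ):ℂ)) = 1 := by
  rw [show (2 * (Real.pi:ℝ) * Complex.I * ((n:ℝ):ℂ) : ℂ)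
      = n * (2 * Real.pi * Complex.I) by push_cast; ring]
  exact Complex.exp_int_mul_two_pi_mul_I n

theorem stmt_14 (M : Matrix (Fin 2) (Fin 2) ℚ) (hM : M = !![4, 0; 2, 3])
    (D : Fin 3 → Fin 2 → ℚ)
    (hD : D = ![![0, 0], ![1, 0], ![0, 1]]) :
    (¬ ∃ S : Fin 3 → Fin 2 → ℤ, Function.Injective S ∧
      (let H : Matrix (Fin 3) (Fin 3) ℂ := fun i j => (1 / Real.sqrt 3 : ℂ) *
        Complex.exp (2 * Real.pi * Complex.I *
          ((M⁻¹.mulVec (D i) ⬝ᵥ (fun k => (S j k : ℚ)) : ℚ) : ℂ));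
      Hᴴ * H = 1)) ∧
    (∀ x y : ℝ,
      1 + Complex.exp (2 * Real.pi * Complex.I * x)
        + Complex.exp (2 * Real.pi * Complex.I * y) = 0 →
      ¬ ∃ z : Fin 2 → ℤ,
        (Mᵀ.map (Rat.cast : ℚ → ℝ)).mulVec ![x, y] = fun i => (z i : ℝ)) := by
  constructor
  · rintro ⟨S, hinj, hH⟩
    set H : Matrix (Fin 3) (Fin 3) ℂ := fun i j => (1 / Real.sqrt 3 : ℂ) *
          Complex.exp (2 * Real.pi * Complex.I *
            ((M⁻¹.mulVec (D i) ⬝ᵥ (fun k => (S j k : ℚ)) : ℚ) : ℂ)) with hHdef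
    have hH' : H * Hᴴ = 1 := mul_eq_one_comm.mp hH
    have hMinv : M⁻¹ = !![1/4, 0; -1/6, 1/3] := by
      apply Matrix.inv_eq_right_inv
      rw [hM]
      ext i j
      fin_cases i <;> fin_cases j <;>
        simp [Matrix.mul_apply, Fin.sum_univ_two, Matrix.one_apply] <;> norm_num
    have hq1 : ∀ j, (M⁻¹.mulVec (D 1) ⬝ᵥ (fun k => (S j k : ℚ)) : ℚ)
        = (S j 0 : ℚ)/4 - (S j 1 : ℚ)/6 := by
      intro j
      simp [hMinv, hD, Matrix.mulVec, dotProduct, Fin.sum_univ_two]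
      ring
    have hq2 : ∀ j, (M⁻¹.mulVec (D 2) ⬝ᵥ (fun k => (S j k : ℚ)) : ℚ)
        = (S j 1 : ℚ)/3 := by
      intro j
      simp [hMinv, hD, Matrix.mulVec, dotProduct, Fin.sum_univ_two]
      ring
    have entry : (H * Hᴴ) 1 2 = 0 := by rw [hH']; simp [Matrix.one_apply]
    rw [Matrix.mul_apply] at entry
    have hc1 : star ((1:ℂ) / Real.sqrt 3) = ((1:ℂ) / Real.sqrt 3) := by
      simp [Complex.ext_iff]
    have hconjexp : ∀ q : ℚ, star (Complex.exp (2 * Real.pi * Complex.I * (q:ℂ)))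
        = Complex.exp (-(2 * Real.pi * Complex.I * (q:ℂ))) := by
      intro q
      rw [Complex.star_def, ← Complex.exp_conj]
      congr 1
      simp [Complex.ext_iff]
    have term : ∀ j, H 1 j * Hᴴ j 2
        = ((1 / Real.sqrt 3 : ℂ))^2 * Complex.I ^ (S j 0 - 2 * S j 1) := by
      intro j
      have step : H 1 j * Hᴴ j 2 = ((1 / Real.sqrt 3 : ℂ))^2 *
          (Complex.exp (2 * Real.pi * Complex.I *
            ((M⁻¹.mulVec (D 1) ⬝ᵥ (fun k => (S j k : ℚ)) : ℚ) : ℂ)) *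
           Complex.exp (-(2 * Real.pi * Complex.I *
            ((M⁻¹.mulVec (D 2) ⬝ᵥ (fun k => (S j k : ℚ)) : ℚ) : ℂ)))) := by
        rw [Matrix.conjTranspose_apply, hHdef]
        simp only []
        rw [star_mul', hc1, hconjexp]
        ring
      rw [step, ← Complex.exp_add, hq1, hq2]
      congr 1
      rw [show (2 * Real.pi * Complex.I * ((((S j 0 : ℚ)/4 - (S j 1 : ℚ)/6 : ℚ)) : ℂ) +
          -(2 * Real.pi * Complex.I * (((S j 1 : ℚ)/3 : ℚ) : ℂ)))
          = 2 * Real.pi * Complex.I * (((S j 0 - 2 * S j 1 : ℤ) : ℂ)/4) by push_cast; ring]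
      exact stmt14_exp_quarter _
    rw [Fin.sum_univ_three, term 0, term 1, term 2, ← mul_add, ← mul_add] at entry
    have hc : ((1 / Real.sqrt 3 : ℂ))^2 ≠ 0 := by
      apply pow_ne_zero
      rw [div_ne_zero_iff]
      constructor
      · norm_num
      · rw [Complex.ofReal_ne_zero]
        positivity
    have hsum0 : Complex.I ^ (S 0 0 - 2 * S 0 1) + Complex.I ^ (S 1 0 - 2 * S 1 1)
        + Complex.I ^ (S 2 0 - 2 * S 2 1) = 0 := by
      rcases mul_eq_zero.mp entry with h | h
      · exact absurd h hc
      · linear_combination h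
    have r0 := stmt14_reim (S 0 0 - 2 * S 0 1)
    have r1 := stmt14_reim (S 1 0 - 2 * S 1 1)
    have r2 := stmt14_reim (S 2 0 - 2 * S 2 1)
    have hre := congrArg Complex.re hsum0
    have him := congrArg Complex.im hsum0
    simp only [Complex.add_re, Complex.add_im, Complex.zero_re, Complex.zero_im] at hre him
    rcases r0 with h0 | h0 <;> rcases r1 with h1 | h1 <;> rcases r2 with h2 | h2 <;> linarith
  · intro x y h ⟨z, hz⟩
    have e0 : 4 * x + 2 * y = (z 0 : ℝ) := by
      have := congrFun hz 0
      simpa [hM, Matrix.mulVec, dotProduct, Fin.sum_univ_two] using this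
    set a := Complex.exp (2 * Real.pi * Complex.I * x) with ha
    set b := Complex.exp (2 * Real.pi * Complex.I * y) with hb
    have key : ∀ r : ℝ, (starRingEnd ℂ) (Complex.exp (2 * Real.pi * Complex.I * r))
        = Complex.exp (-(2 * Real.pi * Complex.I * r)) := by
      intro r
      rw [← Complex.exp_conj]
      congr 1
      simp [Complex.ext_iff]
    have haa : a * (starRingEnd ℂ) a = 1 := by
      rw [ha, key, ← Complex.exp_add]; simp
    have hbb : b * (starRingEnd ℂ) b = 1 := by
      rw [hb, key, ← Complex.exp_add]; simp
    have hb' : b = -1 - a := by linear_combination h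
    have hcb' : (starRingEnd ℂ) b = -1 - (starRingEnd ℂ) a := by
      have := congrArg (starRingEnd ℂ) hb'
      simpa using this
    have hsum : a + (starRingEnd ℂ) a = -1 := by
      have h2 : (-1 - a) * (-1 - (starRingEnd ℂ) a) = 1 := by rw [← hb', ← hcb']; exact hbb
      linear_combination h2 - haa
    have hconj : (starRingEnd ℂ) a = -1 - a := by linear_combination hsum
    have hab : a * b = 1 := by
      rw [hb']
      linear_combination (-a) * hsum + haa
    have ha2 : a ^ 2 = (starRingEnd ℂ) a := by
      linear_combination (-1) * haa + (a - 1) * hconj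
    have ha3 : a ^ 3 = 1 := by linear_combination a * ha2 + haa
    have h3x : ∃ n : ℤ, 3 * x = n := by
      apply stmt14_exp_int'
      rw [show (2 * (Real.pi:ℝ) * Complex.I * ((3*x : ℝ):ℂ) : ℂ)
          = ((3:ℕ):ℂ) * (2 * Real.pi * Complex.I * x) by push_cast; ring,
        Complex.exp_nat_mul]
      exact ha3
    have hxy : ∃ m : ℤ, x + y = m := by
      apply stmt14_exp_int'
      rw [show (2 * (Real.pi:ℝ) * Complex.I * ((x + y : ℝ):ℂ) : ℂ)
          = 2 * Real.pi * Complex.I * x + 2 * Real.pi * Complex.I * y by push_cast; ring,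
        Complex.exp_add]
      exact hab
    obtain ⟨n, hn⟩ := h3x
    obtain ⟨m, hm⟩ := hxy
    have hx : x = ((n - z 0 + 2 * m : ℤ) : ℝ) := by push_cast; linarith
    have ha1 : a = 1 := by rw [ha, hx]; exact stmt14_exp_int'' _
    rw [ha1] at hsum
    simp at hsum
    norm_num at hsum
end
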